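/- arXiv:2003.08878 — 2 statements merged into one kernel-verified Lean document; each statement's English description precedes it below -/
import Mathlib

section
/- Let R be a commutative ring, I an ideal, and x ∈ R. For all n ≥ 1, the intersection ⋂_{α=1}^{n} ( (x^α) + (I^{n+1-α} : x^∞) ) equals the sum Σ_{α=0}^{n} x^α·(I^{n-α} : x^∞). -/
/-!
Put `K α = I^{n+1-α} : x^∞`, an increasing chain of `x`-saturated ideals. One shows
`⋂_{1 ≤ α ≤ m} ((x^α) + K α) ⊆ Σ_{β < m} x^β K (β+1) + (x^m)` by induction on `m`: the partial sum lies
in `K (m+1)`, so by the modular law it suffices to see that `(x^m) ∩ ((x^{m+1}) + K (m+1))` lies in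
`x^m K (m+1) + (x^{m+1})`. If `z x^m = w x^{m+1} + t` with `t ∈ K (m+1)`, then `(z - w x) x^m ∈ K (m+1)`,
hence `z - w x ∈ K (m+1)` by saturation.
-/

/-- The saturation `I : x^∞ = ⋃ k, (I : x^k)`. -/
noncomputable def satur {R : Type*} [CommRing R] (I : Ideal R) (x : R) : Ideal R :=
  ⨆ k : ℕ, Submodule.colon I (Ideal.span {x ^ k})

section

open Ideal Finset

variable {R : Type*} [CommRing R] {x : R}

theorem mem_satur {I : Ideal R} {y : R} : y ∈ satur I x ↔ ∃ k, y * x ^ k ∈ I := by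
  rw [satur, Submodule.mem_iSup_of_directed]
  · simp only [mem_colon_span_singleton]
  · refine Monotone.directed_le fun a b hab => Submodule.colon_mono le_rfl ?_
    rw [SetLike.coe_subset_coe, span_singleton_le_span_singleton]
    exact pow_dvd_pow x hab

theorem satur_mono {I J : Ideal R} (h : I ≤ J) : satur I x ≤ satur J x := fun _ hy =>
  let ⟨k, hk⟩ := mem_satur.1 hy
  mem_satur.2 ⟨k, h hk⟩

theorem le_satur (I : Ideal R) : I ≤ satur I x := fun y hy =>
  mem_satur.2 ⟨0, by simpa using hy⟩

theorem satur_top : satur (⊤ : Ideal R) x = ⊤ :=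
  top_le_iff.1 (le_satur ⊤)

theorem satur_satur_le (I : Ideal R) : satur (satur I x) x ≤ satur I x := fun y hy => by
  obtain ⟨k, hk⟩ := mem_satur.1 hy
  obtain ⟨l, hl⟩ := mem_satur.1 hk
  exact mem_satur.2 ⟨k + l, by rwa [pow_add, ← mul_assoc]⟩

theorem span_pow_inf_le {J : Ideal R} (hJ : satur J x ≤ J) (m : ℕ) :
    span {x ^ m} ⊓ (span {x ^ (m + 1)} ⊔ J) ≤ span {x ^ m} * J ⊔ span {x ^ (m + 1)} := by
  rintro y ⟨hy, hy'⟩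
  obtain ⟨z, rfl⟩ := mem_span_singleton'.1 hy
  obtain ⟨a, ha, t, ht, hat⟩ := Submodule.mem_sup.1 hy'
  obtain ⟨w, rfl⟩ := mem_span_singleton'.1 ha
  have hzw : z - w * x ∈ J := hJ <| mem_satur.2 ⟨m, by convert ht using 1; linear_combination -hat⟩
  refine Submodule.mem_sup.2 ⟨_, mul_mem_mul (mem_span_singleton_self _) hzw, w * x ^ (m + 1),
    mem_span_singleton'.2 ⟨w, rfl⟩, by ring⟩

variable {K : ℕ → Ideal R}

theorem sum_span_pow_mul_le (hK : Monotone K) {m k : ℕ} (hmk : m ≤ k) :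
    ∑ β ∈ range m, span {x ^ β} * K (β + 1) ≤ K k :=
  (sum_eq_sup _ _).trans_le <| Finset.sup_le fun β hβ =>
    mul_le_right.trans (hK (by simp at hβ; omega))

theorem iInf_span_pow_sup_le (hK : Monotone K) (hsat : ∀ α, satur (K α) x ≤ K α) (m : ℕ) :
    ⨅ α ∈ Icc 1 m, (span {x ^ α} ⊔ K α)
      ≤ (∑ β ∈ range m, span {x ^ β} * K (β + 1)) ⊔ span {x ^ m} := by
  induction m with
  | zero => simp
  | succ m ih =>
    set S := ∑ β ∈ range m, span {x ^ β} * K (β + 1)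
    calc ⨅ α ∈ Icc 1 (m + 1), (span {x ^ α} ⊔ K α)
        ≤ (S ⊔ span {x ^ m}) ⊓ (span {x ^ (m + 1)} ⊔ K (m + 1)) :=
          le_inf ((biInf_mono fun _ => by simp; omega).trans ih) (iInf₂_le (m + 1) (by simp))
      _ = S ⊔ span {x ^ m} ⊓ (span {x ^ (m + 1)} ⊔ K (m + 1)) :=
          sup_inf_assoc_of_le _ (le_sup_of_le_right (sum_span_pow_mul_le hK m.le_succ))
      _ ≤ S ⊔ (span {x ^ m} * K (m + 1) ⊔ span {x ^ (m + 1)}) :=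
          sup_le_sup_left (span_pow_inf_le (hsat _) m) _
      _ = (∑ β ∈ range (m + 1), span {x ^ β} * K (β + 1)) ⊔ span {x ^ (m + 1)} := by
          rw [sum_range_succ, Submodule.add_eq_sup, sup_assoc]

theorem sum_span_pow_sup_le (hK : Monotone K) (m : ℕ) :
    (∑ β ∈ range m, span {x ^ β} * K (β + 1)) ⊔ span {x ^ m}
      ≤ ⨅ α ∈ Icc 1 m, (span {x ^ α} ⊔ K α) := by
  refine le_iInf₂ fun α hα => sup_le ((sum_eq_sup _ _).trans_le <| Finset.sup_le fun β hβ => ?_) ?_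
  · rcases le_or_gt α β with h | h
    · exact mul_le_left.trans
        (le_sup_of_le_left (span_singleton_le_span_singleton.2 (pow_dvd_pow x h)))
    · exact mul_le_right.trans (le_sup_of_le_right (hK h))
  · simp only [mem_Icc] at hα
    exact le_sup_of_le_left (span_singleton_le_span_singleton.2 (pow_dvd_pow x hα.2))

theorem iInf_span_pow_sup_eq (hK : Monotone K) (hsat : ∀ α, satur (K α) x ≤ K α) (m : ℕ) :
    ⨅ α ∈ Icc 1 m, (span {x ^ α} ⊔ K α)
      = (∑ β ∈ range m, span {x ^ β} * K (β + 1)) ⊔ span {x ^ m} :=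
  (iInf_span_pow_sup_le hK hsat m).antisymm (sum_span_pow_sup_le hK m)

end

theorem stmt2_general {R : Type*} [CommRing R] (I : Ideal R) (x : R) (n : ℕ) :
    (⨅ α ∈ Finset.Icc 1 n, (Ideal.span {x ^ α} + satur (I ^ (n + 1 - α)) x))
      = ∑ α ∈ Finset.range (n + 1), Ideal.span {x ^ α} * satur (I ^ (n - α)) x := by
  have hK : Monotone fun α => satur (I ^ (n + 1 - α)) x := fun a b hab =>
    satur_mono (Ideal.pow_le_pow_right (by omega))
  rw [Finset.sum_range_succ, Nat.sub_self, pow_zero, Ideal.one_eq_top, satur_top, Ideal.mul_top]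
  simpa only [Submodule.add_eq_sup, Nat.add_sub_add_right] using
    iInf_span_pow_sup_eq hK (fun _ => satur_satur_le _) n

theorem stmt2 {R : Type*} [CommRing R] (I : Ideal R) (x : R) (n : ℕ) (hn : 1 ≤ n) :
    (⨅ α ∈ Finset.Icc 1 n, (Ideal.span {x ^ α} + satur (I ^ (n + 1 - α)) x))
      = ∑ α ∈ Finset.range (n + 1), Ideal.span {x ^ α} * satur (I ^ (n - α)) x :=
  stmt2_general I x n
end

section
/- Let (R,m) be a Noetherian local ring of dimension d with Schenzel ideal b(R). Then for every system of parameters x_1,…,x_d, every 1 ≤ s ≤ d, and every n ≥ 1: b(R)^{2^{s-1}−1}·(⋂_{α ∈ Λ_{s,n}} Q_s(α)) ⊆ Q_s^n, where Q_s(α) = (x_1^{α_1},…,x_s^{α_s}) and Λ_{s,n} is the set of s-tuples of positive integers summing to s+n−1. -/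
/-- `x` is a system of parameters of the local ring `R`. -/
def IsSOP (R : Type*) [CommRing R] [IsLocalRing R] {d : ℕ} (x : Fin d → R) : Prop :=
  (∀ i, x i ∈ IsLocalRing.maximalIdeal R) ∧
    (Ideal.span (Set.range x)).radical = IsLocalRing.maximalIdeal R

/-- `Q_s = (x_1, …, x_s)`. -/
def Qup {R : Type*} [CommRing R] {d : ℕ} (x : Fin d → R) (s : ℕ) : Ideal R :=
  Ideal.span (x '' {i | (i : ℕ) < s})

/-- `α ∈ Λ_{s,n}`: the first `s` entries are positive and sum to `s + n - 1`. -/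
def IsLam {d : ℕ} (s n : ℕ) (α : Fin d → ℕ) : Prop :=
  (∀ i : Fin d, (i : ℕ) < s → 1 ≤ α i) ∧
    (∑ i ∈ Finset.univ.filter (fun i : Fin d => (i : ℕ) < s), α i) = s + n - 1

/-- `Q_s(α) = (x_1^{α_1}, …, x_s^{α_s})`. -/
def PQ {R : Type*} [CommRing R] {d : ℕ} (x : Fin d → R) (s : ℕ) (α : Fin d → ℕ) : Ideal R :=
  Ideal.span ((fun i => x i ^ α i) '' {i | (i : ℕ) < s})

/-- The Schenzel ideal `b(R)`. -/
noncomputable def bIdeal (R : Type*) [CommRing R] [IsLocalRing R] (d : ℕ) : Ideal R :=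
  ⨅ (x : Fin d → R) (_ : IsSOP R x) (s : Fin d),
    Submodule.colon (Qup x (s : ℕ))
      (Submodule.colon (Qup x (s : ℕ)) (Ideal.span {x s}))

/-!
Induction on `s`, carrying along an extra summand `K = (x_i ^ k_i)_{i ∈ T}` of parameters with
indices beyond `s`. To pass from `s` to `s + 1`, write `y = x_{s+1}`. Adding `y ^ j` to `K`, the
induction hypothesis shows that `b ^ (2^(s-1) - 1)` maps `⋂_{α ∈ Λ_{s+1,n}} (Q_{s+1}(α) + K)` into
`Q_s ^ (n-j+1) + (y ^ j) + K` for every `1 ≤ j ≤ n`. Since `b` kills `((x_i ^ a_i)_{i ∈ S} : x_t)`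
whenever `t ∉ S` (reorder the system of parameters), and `Q_s ^ m ⊆ Q_s(β)` for `β ∈ Λ_{s,m}`
(pigeonhole), the induction hypothesis also gives
`b ^ (2^(s-1)) ((Q_s ^ m + K) : y ^ j) ⊆ Q_s ^ m + K`. A telescoping argument over `j` combines
the two: `b ^ (2^s - 1)` maps the intersection into `Q_{s+1} ^ n + K`.
-/

open Finset

section Powers

variable {R : Type*} [CommRing R]

theorem Ideal.mul_le_iff_le_colon {I J K : Ideal R} : I * J ≤ K ↔ I ≤ K.colon J := by
  rw [Ideal.mul_le]
  simp only [SetLike.le_def, Submodule.mem_colon, SetLike.mem_coe, smul_eq_mul]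

theorem Ideal.mem_sup_span_singleton_sup {A K : Ideal R} {z u : R} :
    u ∈ A ⊔ Ideal.span {z} ⊔ K ↔ ∃ w, u - w * z ∈ A ⊔ K := by
  rw [sup_right_comm, Submodule.mem_sup]
  constructor
  · rintro ⟨a, ha, b, hb, rfl⟩
    obtain ⟨w, rfl⟩ := Ideal.mem_span_singleton'.1 hb
    exact ⟨w, by simpa using ha⟩
  · rintro ⟨w, hw⟩
    exact ⟨_, hw, w * z, Ideal.mem_span_singleton'.2 ⟨w, rfl⟩, by ring⟩

variable {ι : Type*} (x : ι → R)

theorem Ideal.span_image_pow_eq_top {A : Set ι} {β : ι → ℕ} {i : ι} (hi : i ∈ A)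
    (hβi : β i = 0) : Ideal.span ((fun i => x i ^ β i) '' A) = ⊤ :=
  (Ideal.eq_top_iff_one _).2 <| by
    simpa [hβi] using Ideal.subset_span (Set.mem_image_of_mem (fun i => x i ^ β i) hi)

theorem Ideal.span_singleton_mul_span_image_pow_update_le [DecidableEq ι] {A : Set ι}
    {β : ι → ℕ} {i : ι} (hi : i ∈ A) (hβi : β i ≠ 0) :
    Ideal.span {x i} * Ideal.span ((fun j => x j ^ Function.update β i (β i - 1) j) '' A) ≤
      Ideal.span ((fun j => x j ^ β j) '' A) := by
  rw [mul_comm, Ideal.mul_le_iff_le_colon, Ideal.span_le]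
  rintro _ ⟨j, hj, rfl⟩
  rw [SetLike.mem_coe, Ideal.mem_colon_span_singleton]
  dsimp only
  rcases eq_or_ne j i with rfl | hji
  · rw [Function.update_self, ← pow_succ, Nat.sub_add_cancel (Nat.one_le_iff_ne_zero.2 hβi)]
    exact Ideal.subset_span ⟨j, hj, rfl⟩
  · rw [Function.update_of_ne hji]
    exact Ideal.mul_mem_right _ _ (Ideal.subset_span ⟨j, hj, rfl⟩)

theorem Ideal.span_image_pow_le_of_sum_lt [DecidableEq ι] (A : Finset ι) (m : ℕ) (β : ι → ℕ)
    (hβ : ∑ i ∈ A, β i < A.card + m) :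
    Ideal.span (x '' A) ^ m ≤ Ideal.span ((fun i => x i ^ β i) '' A) := by
  induction m generalizing β with
  | zero =>
    obtain ⟨i, hi, hβi⟩ := exists_lt_of_sum_lt (g := fun _ => 1) (by simpa using hβ)
    rw [Ideal.span_image_pow_eq_top x hi (Nat.lt_one_iff.1 hβi)]
    exact le_top
  | succ m ih =>
    rw [pow_succ', Ideal.mul_le_iff_le_colon, Ideal.span_le]
    rintro _ ⟨i, hi, rfl⟩
    by_cases hβi : β i = 0
    · simp [Ideal.span_image_pow_eq_top x hi hβi]
    have hsum : ∑ j ∈ A, Function.update β i (β i - 1) j < A.card + m := by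
      have h := Finset.add_sum_erase A β hi
      rw [Finset.sum_update_of_mem hi, ← Finset.erase_eq]
      omega
    refine Submodule.mem_colon.2 fun r hr => ?_
    rw [smul_eq_mul]
    exact Ideal.span_singleton_mul_span_image_pow_update_le x hi hβi
      (Ideal.mul_mem_mul (Ideal.mem_span_singleton_self _) (ih _ hsum hr))

theorem Ideal.span_image_pow_insert_update [DecidableEq ι] (k : ι → ℕ) {T : Set ι} {p : ι}
    (hp : p ∉ T) (j : ℕ) :
    Ideal.span ((fun i => x i ^ Function.update k p j i) '' insert p T) =
      Ideal.span {x p ^ j} ⊔ Ideal.span ((fun i => x i ^ k i) '' T) := by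
  rw [Set.image_insert_eq, Ideal.span_insert, Function.update_self,
    Set.image_congr fun i hi => by rw [Function.update_of_ne (ne_of_mem_of_not_mem hi hp)]]

end Powers

section Telescope

variable {R : Type*} [CommRing R] {Q K : Ideal R} {y : R}

theorem mul_mem_pow_sup_of_mem_pow_sup {a : R} {m : ℕ} (ha : a ∈ Q ^ m ⊔ K) (j : ℕ) :
    a * y ^ j ∈ (Q ⊔ Ideal.span {y}) ^ (m + j) ⊔ K := by
  obtain ⟨q, hq, k, hk, rfl⟩ := Submodule.mem_sup.1 ha
  rw [add_mul, pow_add]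
  exact Submodule.add_mem_sup
    (Ideal.mul_mem_mul (Ideal.pow_right_mono le_sup_left m hq)
      (Ideal.pow_mem_pow (Ideal.mem_sup_right (Ideal.mem_span_singleton_self y)) j))
    (Ideal.mul_mem_right _ _ hk)

/-- Writing `u = v_j + w_j y^j + k_j` with `v_j ∈ Q^(n-j+1)`, `k_j ∈ K` (here `j = n - i`),
consecutive differences show `w_j - w_(j+1) y ∈ (Q^(n-j) + K) : y^j`; so `g w_j y^j ∈ (Q, y)^n + K`
follows by descending induction on `j`, starting from `j = n`. -/
theorem exists_mul_pow_mem_pow_sup_of_mul_colon_le {B : Ideal R} {n : ℕ}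
    (hB : ∀ m j, 0 < m → 0 < j → B * (Q ^ m ⊔ K).colon (Ideal.span {y ^ j}) ≤ Q ^ m ⊔ K)
    {g u : R} (hg : g ∈ B) (hu : ∀ i < n, ∃ w, u - w * y ^ (n - i) ∈ Q ^ (i + 1) ⊔ K)
    {i : ℕ} (hi : i < n) :
    ∃ w, u - w * y ^ (n - i) ∈ Q ^ (i + 1) ⊔ K ∧
      g * (w * y ^ (n - i)) ∈ (Q ⊔ Ideal.span {y}) ^ n ⊔ K := by
  induction i with
  | zero =>
    obtain ⟨w, hw⟩ := hu 0 hi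
    refine ⟨w, hw, Ideal.mem_sup_left (Ideal.mul_mem_left _ _ (Ideal.mul_mem_left _ _ ?_))⟩
    exact Ideal.pow_mem_pow (Ideal.mem_sup_right (Ideal.mem_span_singleton_self y)) n
  | succ i ih =>
    obtain ⟨w', hw', hgw'⟩ := ih (by omega)
    obtain ⟨w, hw⟩ := hu (i + 1) hi
    have hpow : y ^ (n - i) = y ^ (n - (i + 1)) * y := by
      rw [← pow_succ]
      congr 1
      omega
    have hdiff : (w - w' * y) * y ^ (n - (i + 1)) ∈ Q ^ (i + 1) ⊔ K := by
      have h := Submodule.sub_mem _ hw'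
        (sup_le_sup_right (Ideal.pow_le_pow_right (Nat.le_succ _)) K hw)
      rwa [hpow, show u - w' * (y ^ (n - (i + 1)) * y) - (u - w * y ^ (n - (i + 1))) =
        (w - w' * y) * y ^ (n - (i + 1)) by ring] at h
    have hg' : g * (w - w' * y) ∈ Q ^ (i + 1) ⊔ K :=
      hB _ _ (Nat.succ_pos i) (by omega)
        (Ideal.mul_mem_mul hg (Ideal.mem_colon_span_singleton.2 hdiff))
    have hsplit : g * (w * y ^ (n - (i + 1))) =
        g * (w - w' * y) * y ^ (n - (i + 1)) + g * (w' * y ^ (n - i)) := by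
      rw [hpow]
      ring
    refine ⟨w, hw, hsplit ▸ Submodule.add_mem _ ?_ hgw'⟩
    simpa [show i + 1 + (n - (i + 1)) = n by omega] using
      mul_mem_pow_sup_of_mem_pow_sup hg' (n - (i + 1))

theorem mul_iInf_le_pow_sup_of_mul_colon_le {B : Ideal R} {n : ℕ}
    (hB : ∀ m j, 0 < m → 0 < j → B * (Q ^ m ⊔ K).colon (Ideal.span {y ^ j}) ≤ Q ^ m ⊔ K) :
    B * ⨅ (i) (_ : i < n), (Q ^ (i + 1) ⊔ Ideal.span {y ^ (n - i)} ⊔ K) ≤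
      (Q ⊔ Ideal.span {y}) ^ n ⊔ K := by
  refine Ideal.mul_le.2 fun g hg u hu => ?_
  simp only [Submodule.mem_iInf, Ideal.mem_sup_span_singleton_sup] at hu
  cases n with
  | zero => simp
  | succ n =>
    obtain ⟨w, hw, hgw⟩ :=
      exists_mul_pow_mem_pow_sup_of_mul_colon_le hB hg hu (Nat.lt_succ_self n)
    rw [Nat.add_sub_cancel_left, pow_one] at hw hgw
    have hQ : Q ^ (n + 1) ⊔ K ≤ (Q ⊔ Ideal.span {y}) ^ (n + 1) ⊔ K :=
      sup_le_sup_right (Ideal.pow_right_mono le_sup_left _) K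
    simpa [mul_sub] using Submodule.add_mem _ (hQ (Ideal.mul_mem_left _ g hw)) hgw

end Telescope

theorem Fin.exists_perm_image_Iio_eq {d : ℕ} (S : Finset (Fin d)) {t : Fin d} (ht : t ∉ S) :
    ∃ (c : Fin d) (σ : Equiv.Perm (Fin d)), σ '' Set.Iio c = S ∧ σ c = t := by
  classical
  have hc : S.card < d := by
    calc S.card < (insert t S).card := by rw [card_insert_of_notMem ht]; omega
      _ ≤ d := by simpa using card_le_univ (insert t S)
  let c : Fin d := ⟨S.card, hc⟩
  have hcard : Fintype.card {i // i < c} = Fintype.card {i // i ∈ S} := by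
    rw [Fintype.card_subtype, filter_gt_eq_Iio]
    simp [c]
  let e : {i // i < c} ≃ {i // i ∈ S} := Fintype.equivOfCardEq hcard
  let τ := e.extendSubtype
  -- `τ` already maps `Iio c` onto `S`; the swap moves `τ c ∉ S` to `t ∉ S` without touching `S`.
  have hfix : ∀ i < c, (τ.trans (Equiv.swap (τ c) t)) i = τ i := fun i hi =>
    Equiv.swap_apply_of_ne_of_ne (τ.injective.ne hi.ne)
      fun h => ht (h ▸ e.extendSubtype_mem i hi)
  refine ⟨c, τ.trans (Equiv.swap (τ c) t), ?_, by simp⟩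
  ext a
  constructor
  · rintro ⟨i, hi, rfl⟩
    rw [hfix i hi]
    exact e.extendSubtype_mem i hi
  · intro ha
    refine ⟨e.symm ⟨a, ha⟩, (e.symm ⟨a, ha⟩).2, ?_⟩
    rw [hfix _ (e.symm ⟨a, ha⟩).2, e.extendSubtype_apply_of_mem _ (e.symm ⟨a, ha⟩).2]
    simp

section SystemOfParameters

variable {R : Type*} [CommRing R] [IsLocalRing R] {d : ℕ} {x : Fin d → R}

theorem IsSOP.comp_perm (hx : IsSOP R x) (σ : Equiv.Perm (Fin d)) : IsSOP R (x ∘ σ) :=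
  ⟨fun i => hx.1 (σ i), by rw [EquivLike.range_comp]; exact hx.2⟩

theorem IsSOP.pow (hx : IsSOP R x) {e : Fin d → ℕ} (he : ∀ i, 0 < e i) :
    IsSOP R fun i => x i ^ e i := by
  refine ⟨fun i => Ideal.pow_mem_of_mem _ (hx.1 i) _ (he i), le_antisymm ?_ ?_⟩
  · rw [← hx.2]
    refine Ideal.radical_mono (Ideal.span_le.2 (Set.range_subset_iff.2 fun i => ?_))
    exact Ideal.pow_mem_of_mem _ (Ideal.subset_span (Set.mem_range_self i)) _ (he i)
  · rw [← hx.2, Ideal.radical_le_radical_iff, Ideal.span_le, Set.range_subset_iff]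
    exact fun i => ⟨e i, Ideal.subset_span (Set.mem_range_self i)⟩

theorem bIdeal_le_colon (hx : IsSOP R x) (c : Fin d) :
    bIdeal R d ≤ (Qup x c).colon ((Qup x c).colon (Ideal.span {x c})) :=
  (iInf_le _ x).trans ((iInf_le _ hx).trans (iInf_le _ c))

theorem bIdeal_mul_colon_le (hx : IsSOP R x) {S : Finset (Fin d)} {t : Fin d} (ht : t ∉ S) :
    bIdeal R d * (Ideal.span (x '' S)).colon (Ideal.span {x t}) ≤ Ideal.span (x '' S) := by
  obtain ⟨c, σ, hσS, hσc⟩ := Fin.exists_perm_image_Iio_eq S ht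
  have hQ : Qup (x ∘ σ) c = Ideal.span (x '' S) := by
    rw [Qup, Set.image_comp, ← hσS]
    rfl
  have hb := bIdeal_le_colon (hx.comp_perm σ) c
  rw [hQ, Function.comp_apply, hσc] at hb
  exact Ideal.mul_le_iff_le_colon.2 hb

theorem bIdeal_mul_colon_pow_le (hx : IsSOP R x) {S : Finset (Fin d)} {t : Fin d} (ht : t ∉ S)
    {e : Fin d → ℕ} (he : ∀ i ∈ S, 0 < e i) {j : ℕ} (hj : 0 < j) :
    bIdeal R d * (Ideal.span ((fun i => x i ^ e i) '' S)).colon (Ideal.span {x t ^ j}) ≤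
      Ideal.span ((fun i => x i ^ e i) '' S) := by
  classical
  let e' := Function.update (S.piecewise e 1) t j
  have he' : ∀ i, 0 < e' i := by
    intro i
    rcases eq_or_ne i t with rfl | hit
    · simpa [e'] using hj
    · by_cases hi : i ∈ S <;> simp [e', hit, hi, he]
  have hS : (fun i => x i ^ e' i) '' S = (fun i => x i ^ e i) '' S :=
    Set.image_congr fun i hi => by simp [e', ne_of_mem_of_not_mem hi ht, Finset.mem_coe.1 hi]
  simpa [hS, e'] using bIdeal_mul_colon_le (hx.pow he') ht

end SystemOfParameters

section Parameters

variable {R : Type*} [CommRing R] {d : ℕ} (x : Fin d → R)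

theorem Fin.filter_val_lt_succ {s : ℕ} (h : s < d) :
    (univ.filter fun i : Fin d => (i : ℕ) < s + 1) =
      insert ⟨s, h⟩ (univ.filter fun i : Fin d => (i : ℕ) < s) := by
  ext i
  simp only [mem_filter, mem_univ, true_and, mem_insert, Fin.ext_iff]
  omega

theorem Fin.setOf_val_lt_succ {s : ℕ} (h : s < d) :
    {i : Fin d | (i : ℕ) < s + 1} = insert ⟨s, h⟩ {i : Fin d | (i : ℕ) < s} := by
  ext i
  simp only [Set.mem_ofPred_eq, Set.mem_insert_iff, Fin.ext_iff]
  omega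

theorem PQ_succ {s : ℕ} (h : s < d) (α : Fin d → ℕ) :
    PQ x (s + 1) α = PQ x s α ⊔ Ideal.span {x ⟨s, h⟩ ^ α ⟨s, h⟩} := by
  rw [PQ, PQ, Fin.setOf_val_lt_succ h, Set.image_insert_eq, Ideal.span_insert, sup_comm]

theorem Qup_succ {s : ℕ} (h : s < d) : Qup x (s + 1) = Qup x s ⊔ Ideal.span {x ⟨s, h⟩} := by
  rw [Qup, Qup, Fin.setOf_val_lt_succ h, Set.image_insert_eq, Ideal.span_insert, sup_comm]

theorem PQ_congr {s : ℕ} {α β : Fin d → ℕ} (h : ∀ i : Fin d, (i : ℕ) < s → α i = β i) :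
    PQ x s α = PQ x s β :=
  congrArg Ideal.span (Set.image_congr fun i hi => by rw [h i hi])

theorem Qup_pow_le_PQ {s m : ℕ} (hsd : s ≤ d) {β : Fin d → ℕ} (hβ : IsLam s m β) (hm : 0 < m) :
    Qup x s ^ m ≤ PQ x s β := by
  have h := Ideal.span_image_pow_le_of_sum_lt x (univ.filter fun i : Fin d => (i : ℕ) < s) m β
    (by rw [hβ.2, Fin.card_filter_val_lt]; omega)
  rw [Qup, PQ]
  simpa only [coe_filter_univ] using h

theorem isLam_one_const (hd : 0 < d) {n : ℕ} (hn : 0 < n) : IsLam 1 n fun _ : Fin d => n :=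
  ⟨fun _ _ => hn, by
    rw [sum_const, Fin.card_filter_val_lt, Nat.min_eq_right hd, smul_eq_mul]
    omega⟩

theorem IsLam.update_succ {s m j : ℕ} {β : Fin d → ℕ} (hβ : IsLam s (m + 1) β) (h : s < d)
    (hj : 0 < j) : IsLam (s + 1) (m + j) (Function.update β ⟨s, h⟩ j) := by
  refine ⟨fun i hi => ?_, ?_⟩
  · rcases eq_or_ne i ⟨s, h⟩ with rfl | hne
    · rw [Function.update_self]
      exact hj
    · have hi' : (i : ℕ) ≠ s := fun e => hne (Fin.ext e)
      rw [Function.update_of_ne hne]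
      exact hβ.1 i (by omega)
  · have hrest : ∑ i ∈ univ.filter (fun i : Fin d => (i : ℕ) < s), Function.update β ⟨s, h⟩ j i =
        ∑ i ∈ univ.filter (fun i : Fin d => (i : ℕ) < s), β i :=
      sum_congr rfl fun i hi => Function.update_of_ne (by rintro rfl; simp at hi) _ _
    rw [Fin.filter_val_lt_succ h, sum_insert (by simp), Function.update_self, hrest, hβ.2]
    omega

theorem iInf_PQ_succ_sup_le {t : ℕ} (h : t < d) {n i : ℕ} (hi : i < n) (K : Ideal R) :
    ⨅ (α : Fin d → ℕ) (_ : IsLam (t + 1) n α), (PQ x (t + 1) α ⊔ K) ≤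
      ⨅ (β : Fin d → ℕ) (_ : IsLam t (i + 1) β),
        (PQ x t β ⊔ (Ideal.span {x ⟨t, h⟩ ^ (n - i)} ⊔ K)) := by
  refine le_iInf₂ fun β hβ => ?_
  have hα := hβ.update_succ h (j := n - i) (by omega)
  rw [show i + (n - i) = n by omega] at hα
  refine (iInf₂_le _ hα).trans_eq ?_
  rw [PQ_succ x h, Function.update_self, sup_assoc,
    PQ_congr x fun j hj => Function.update_of_ne (by rintro rfl; simp at hj) _ _]

end Parameters

section Main

variable {R : Type*} [CommRing R] [IsLocalRing R] {d : ℕ} {x : Fin d → R}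

theorem bIdeal_mul_colon_PQ_sup_le (hx : IsSOP R x) {t : ℕ} (ht : t < d) {β : Fin d → ℕ}
    (hβ : ∀ i : Fin d, (i : ℕ) < t → 0 < β i) {T : Finset (Fin d)} (hT : ∀ i ∈ T, t < (i : ℕ))
    {k : Fin d → ℕ} (hk : ∀ i, 0 < k i) {j : ℕ} (hj : 0 < j) :
    bIdeal R d * (PQ x t β ⊔ Ideal.span ((fun i => x i ^ k i) '' T)).colon
        (Ideal.span {x ⟨t, ht⟩ ^ j}) ≤
      PQ x t β ⊔ Ideal.span ((fun i => x i ^ k i) '' T) := by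
  let e : Fin d → ℕ := fun i => if (i : ℕ) < t then β i else k i
  have hsplit : PQ x t β ⊔ Ideal.span ((fun i => x i ^ k i) '' T) =
      Ideal.span ((fun i => x i ^ e i) '' ↑(univ.filter (fun i : Fin d => (i : ℕ) < t) ∪ T)) := by
    rw [coe_union, Set.image_union, Ideal.span_union, coe_filter_univ, PQ]
    congr 2 <;> refine Set.image_congr fun i hi => ?_
    · simp [e, show (i : ℕ) < t from hi]
    · simp [e, (hT i hi).not_gt]
  rw [hsplit]
  refine bIdeal_mul_colon_pow_le hx ?_ (fun i _ => ?_) hj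
  · simpa using fun h => (hT _ h).ne rfl
  · by_cases hit : (i : ℕ) < t
    · simpa [e, hit] using hβ i hit
    · simpa [e, hit] using hk i

theorem bIdeal_two_pow_mul_colon_le (hx : IsSOP R x) {s : ℕ} (hs : s + 1 < d)
    {T : Finset (Fin d)} (hT : ∀ i ∈ T, s + 1 < (i : ℕ)) {k : Fin d → ℕ} (hk : ∀ i, 0 < k i)
    (hbound : ∀ m, 0 < m → bIdeal R d ^ (2 ^ s - 1) * ⨅ (β : Fin d → ℕ) (_ : IsLam (s + 1) m β),
        (PQ x (s + 1) β ⊔ Ideal.span ((fun i => x i ^ k i) '' T)) ≤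
      Qup x (s + 1) ^ m ⊔ Ideal.span ((fun i => x i ^ k i) '' T))
    {m j : ℕ} (hm : 0 < m) (hj : 0 < j) :
    bIdeal R d ^ 2 ^ s * (Qup x (s + 1) ^ m ⊔ Ideal.span ((fun i => x i ^ k i) '' T)).colon
        (Ideal.span {x ⟨s + 1, hs⟩ ^ j}) ≤
      Qup x (s + 1) ^ m ⊔ Ideal.span ((fun i => x i ^ k i) '' T) := by
  rw [← Nat.sub_add_cancel (Nat.one_le_two_pow (n := s)), pow_succ, mul_assoc]
  refine (Ideal.mul_mono_right (le_iInf₂ fun β hβ => ?_)).trans (hbound m hm)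
  exact (Ideal.mul_mono_right (Submodule.colon_mono
    (sup_le_sup_right (Qup_pow_le_PQ x hs.le hβ hm) _) subset_rfl)).trans
    (bIdeal_mul_colon_PQ_sup_le hx hs hβ.1 hT hk hj)

theorem bIdeal_pow_mul_iInf_PQ_sup_le (hx : IsSOP R x) (s : ℕ) (hs : s < d) {n : ℕ} (hn : 0 < n)
    (T : Finset (Fin d)) (hT : ∀ i ∈ T, s < (i : ℕ)) (k : Fin d → ℕ) (hk : ∀ i, 0 < k i) :
    bIdeal R d ^ (2 ^ s - 1) * ⨅ (α : Fin d → ℕ) (_ : IsLam (s + 1) n α),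
        (PQ x (s + 1) α ⊔ Ideal.span ((fun i => x i ^ k i) '' T)) ≤
      Qup x (s + 1) ^ n ⊔ Ideal.span ((fun i => x i ^ k i) '' T) := by
  induction s generalizing n T k with
  | zero =>
    rw [pow_zero, Nat.sub_self, pow_zero, one_mul]
    refine (iInf₂_le _ (isLam_one_const hs hn)).trans (sup_le_sup_right ?_ _)
    rw [PQ_succ x hs, Qup_succ x hs]
    simp [PQ, Qup, Ideal.span_singleton_pow]
  | succ s ih =>
    set p : Fin d := ⟨s + 1, hs⟩
    set K := Ideal.span ((fun i => x i ^ k i) '' T)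
    set b := bIdeal R d
    have hsd : s < d := by omega
    have hpT : p ∉ T := fun h => (hT p h).ne rfl
    have hlevel : ∀ i < n, b ^ (2 ^ s - 1) * ⨅ (α : Fin d → ℕ) (_ : IsLam (s + 2) n α),
        (PQ x (s + 2) α ⊔ K) ≤ Qup x (s + 1) ^ (i + 1) ⊔ Ideal.span {x p ^ (n - i)} ⊔ K := by
      intro i hi
      have h := ih hsd (Nat.succ_pos i) (insert p T)
        ((forall_mem_insert _ _ _).2 ⟨Nat.lt_succ_self s, fun i hi => (hT i hi).le⟩)
        (Function.update k p (n - i))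
        ((Function.forall_update_iff k fun _ e => 0 < e).2 ⟨by omega, fun i _ => hk i⟩)
      rw [coe_insert, Ideal.span_image_pow_insert_update x k hpT] at h
      rw [sup_assoc]
      exact (Ideal.mul_mono_right (iInf_PQ_succ_sup_le x hs hi K)).trans h
    calc b ^ (2 ^ (s + 1) - 1) * ⨅ (α : Fin d → ℕ) (_ : IsLam (s + 2) n α), (PQ x (s + 2) α ⊔ K)
        = b ^ 2 ^ s * (b ^ (2 ^ s - 1) *
          ⨅ (α : Fin d → ℕ) (_ : IsLam (s + 2) n α), (PQ x (s + 2) α ⊔ K)) := by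
          rw [← mul_assoc, ← pow_add, pow_succ]
          congr 2
          have := Nat.one_le_two_pow (n := s)
          omega
      _ ≤ b ^ 2 ^ s * ⨅ (i) (_ : i < n),
          (Qup x (s + 1) ^ (i + 1) ⊔ Ideal.span {x p ^ (n - i)} ⊔ K) :=
        Ideal.mul_mono_right (le_iInf₂ hlevel)
      _ ≤ (Qup x (s + 1) ⊔ Ideal.span {x p}) ^ n ⊔ K :=
        mul_iInf_le_pow_sup_of_mul_colon_le fun m j hm hj => bIdeal_two_pow_mul_colon_le hx hs hT
          hk (fun m hm => ih hsd hm T (fun i hi => (hT i hi).le) k hk) hm hj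
      _ = Qup x (s + 2) ^ n ⊔ K := by rw [Qup_succ x hs]

end Main

theorem stmt9_general {R : Type*} [CommRing R] [IsLocalRing R] {d : ℕ}
    (x : Fin d → R) (hx : IsSOP R x)
    (s : ℕ) (hs : 1 ≤ s) (hsd : s ≤ d) (n : ℕ) (hn : 1 ≤ n) :
    bIdeal R d ^ (2 ^ (s - 1) - 1) * (⨅ (α : Fin d → ℕ) (_ : IsLam s n α), PQ x s α)
      ≤ Qup x s ^ n := by
  obtain ⟨s, rfl⟩ := Nat.exists_eq_add_of_le' hs
  simpa using bIdeal_pow_mul_iInf_PQ_sup_le hx s hsd hn ∅ (by simp) 1 fun _ => Nat.one_pos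

theorem stmt9 {R : Type*} [CommRing R] [IsLocalRing R] [IsNoetherianRing R] {d : ℕ}
    (hd : ringKrullDim R = d) (x : Fin d → R) (hx : IsSOP R x)
    (s : ℕ) (hs : 1 ≤ s) (hsd : s ≤ d) (n : ℕ) (hn : 1 ≤ n) :
    bIdeal R d ^ (2 ^ (s - 1) - 1) * (⨅ (α : Fin d → ℕ) (_ : IsLam s n α), PQ x s α)
      ≤ Qup x s ^ n :=
  stmt9_general x hx s hs hsd n hn
end
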